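/- The critical points of the map F|Ω (where F(v₁,…,v_{n−1}) = (|v₁|, |v₂−v₁|, …, |v_{n−1}|)) are exactly the tuples (v₁,…,v_{n−1}) ∈ Ω for which the vectors v₁,…,v_{n−1} ∈ ℝ^d are collinear. -/

import Mathlib

/-!
Where all edges of the closed polygon `0, v₁, …, v_{n−1}, 0` are nonzero, the derivative of `F`
is `x ↦ (⟪u_j, e_j x⟫)_j`, with `e_j` the (linear) edge maps and `u_j` the unit edge directions.
It fails to be onto iff a covector `μ ≠ 0` kills its image, and testing
`∑ μ_j ⟪u_j, e_j x⟫ = 0` on `x` supported at a single vertex shows that this says exactly that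
`μ_j u_j` does not depend on `j`. For unit vectors `u_j` such a `μ` exists iff the `u_j` lie on a
common line; hence iff all edges do, i.e. iff all vertices do.
-/

open scoped RealInnerProductSpace

/-- The map `F : (ℝ^d)^{n−1} → ℝⁿ`,
`F(v₁,…,v_{n−1}) = (|v₁|, |v₂−v₁|, …, |v_{n−1}−v_{n−2}|, |v_{n−1}|)`,
written via the convention `v_0 = v_n = 0` (indices shifted to start at `0`). -/
noncomputable def Fmap (d n : ℕ) (v : Fin (n - 1) → EuclideanSpace ℝ (Fin d)) :
    Fin n → ℝ := fun j =>
  let V : ℤ → EuclideanSpace ℝ (Fin d) := fun k =>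
    if h : 0 ≤ k ∧ k < (n : ℤ) - 1 then v ⟨k.toNat, by omega⟩ else 0
  ‖V (j : ℤ) - V ((j : ℤ) - 1)‖

/-- The open set `Ω ⊆ (ℝ^d)^{n−1}` where `v₁ ≠ 0`, `v_j ≠ v_{j+1}` and `v_{n−1} ≠ 0`. -/
def OmegaSet (d n : ℕ) (hn : 2 ≤ n) : Set (Fin (n - 1) → EuclideanSpace ℝ (Fin d)) :=
  {v | v ⟨0, by omega⟩ ≠ 0 ∧
       (∀ j : ℕ, (h : j + 1 < n - 1) → v ⟨j, by omega⟩ ≠ v ⟨j + 1, h⟩) ∧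
       v ⟨n - 2, by omega⟩ ≠ 0}

theorem Fin.apply_eq_apply_of_forall_apply_eq_apply_succ {α : Type*} {n : ℕ} {y : Fin n → α}
    (h : ∀ k : Fin (n - 1), y ⟨k, by omega⟩ = y ⟨k + 1, by omega⟩) (i j : Fin n) :
    y i = y j := by
  have h0 : ∀ (k : ℕ) (hk : k < n), y ⟨k, hk⟩ = y ⟨0, by omega⟩ := by
    intro k hk
    induction k with
    | zero => rfl
    | succ k ih => rw [← h ⟨k, by omega⟩, ih]
  rw [h0 i i.isLt, h0 j j.isLt]

theorem not_surjective_iff_exists_dotProduct_eq_zero {K V ι : Type*} [Field K] [AddCommGroup V]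
    [Module K V] [Fintype ι] [DecidableEq ι] (f : V →ₗ[K] ι → K) :
    ¬ Function.Surjective f ↔ ∃ μ : ι → K, μ ≠ 0 ∧ ∀ x, μ ⬝ᵥ f x = 0 := by
  constructor
  · intro hf
    rw [← LinearMap.range_eq_top, ← Ne, ← lt_top_iff_ne_top] at hf
    obtain ⟨φ, hφ, hrange⟩ := (LinearMap.range f).exists_le_ker_of_lt_top hf
    refine ⟨(dotProductEquiv K ι).symm φ, by simpa using hφ, fun x => ?_⟩
    rw [← dotProductEquiv_apply_apply, LinearEquiv.apply_symm_apply]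
    exact hrange ⟨x, rfl⟩
  · rintro ⟨μ, hμ, hker⟩ hf
    exact hμ (dotProduct_eq_zero μ fun y => by obtain ⟨x, rfl⟩ := hf y; exact hker x)

section InnerProductSpace

variable {E : Type*} [NormedAddCommGroup E] [InnerProductSpace ℝ E]

theorem hasFDerivAt_norm {x : E} (hx : x ≠ 0) :
    HasFDerivAt (fun y : E => ‖y‖) (innerSL ℝ (‖x‖⁻¹ • x)) x := by
  have h := (Real.hasDerivAt_sqrt (by positivity : ‖x‖ ^ 2 ≠ 0)).comp_hasFDerivAt x
    (hasStrictFDerivAt_norm_sq x).hasFDerivAt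
  simp only [Function.comp_def, Real.sqrt_sq (norm_nonneg _)] at h
  refine h.congr_fderiv (ContinuousLinearMap.ext fun y => ?_)
  simp only [smul_apply, coe_innerSL_apply, map_smul, smul_eq_mul, nsmul_eq_mul,
    Nat.cast_ofNat]
  field_simp

theorem inner_smul_unit_eq_of_mem_span_singleton {u w : E} (hu : ‖u‖ = 1) (huw : u ∈ ℝ ∙ w) :
    ⟪u, w⟫ • u = w := by
  obtain ⟨a, rfl⟩ := Submodule.mem_span_singleton.1 huw
  rw [norm_smul, Real.norm_eq_abs] at hu
  have ha : a * ‖w‖ ^ 2 * a = 1 :=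
    calc a * ‖w‖ ^ 2 * a = (|a| * ‖w‖) ^ 2 := by rw [mul_pow, sq_abs]; ring
      _ = 1 := by rw [hu, one_pow]
  rw [real_inner_smul_left, real_inner_self_eq_norm_sq, smul_smul, ha, one_smul]

theorem exists_smul_eq_iff_exists_mem_span_singleton {ι : Type*} [Nonempty ι] {u : ι → E}
    (hu : ∀ i, ‖u i‖ = 1) :
    (∃ μ : ι → ℝ, μ ≠ 0 ∧ ∀ i j, μ i • u i = μ j • u j) ↔ ∃ w : E, ∀ i, u i ∈ ℝ ∙ w := by
  constructor
  · rintro ⟨μ, hμ, h⟩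
    obtain ⟨i₀, hi₀⟩ := Function.ne_iff.1 hμ
    refine ⟨μ i₀ • u i₀, fun i => ?_⟩
    have habs : |μ i| = |μ i₀| := by
      simpa [norm_smul, hu] using congrArg norm (h i i₀)
    have hμi : μ i ≠ 0 := by rwa [← abs_ne_zero, habs, abs_ne_zero]
    rw [← h i]
    exact (Submodule.smul_mem_iff _ hμi).1 (Submodule.mem_span_singleton_self _)
  · rintro ⟨w, hw⟩
    have hproj i : ⟪u i, w⟫ • u i = w := inner_smul_unit_eq_of_mem_span_singleton (hu i) (hw i)
    refine ⟨fun i => ⟪u i, w⟫, fun h0 => ?_, fun i j => by rw [hproj, hproj]⟩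
    obtain ⟨i⟩ := ‹Nonempty ι›
    have hμi : ⟪u i, w⟫ = 0 := congrFun h0 i
    have hw0 : w = 0 := by rw [← hproj i, hμi, zero_smul]
    have := hw i
    rw [hw0, Submodule.span_zero_singleton, Submodule.mem_bot] at this
    simpa [this] using hu i

end InnerProductSpace

namespace Polygon

variable {E : Type*} [NormedAddCommGroup E] [InnerProductSpace ℝ E] {n : ℕ}

/-- `vertex n k x` is `x k` for `0 ≤ k < n - 1` and `0` otherwise, so that for `j : Fin n` the maps
`edge n j` are the `n` sides of the closed polygon `0, x 0, …, x (n - 2), 0`, as in `Fmap`. -/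
noncomputable def vertex (n : ℕ) (k : ℤ) : (Fin (n - 1) → E) →L[ℝ] E :=
  if h : 0 ≤ k ∧ k < (n : ℤ) - 1 then ContinuousLinearMap.proj ⟨k.toNat, by omega⟩ else 0

noncomputable def edge (n : ℕ) (j : ℤ) : (Fin (n - 1) → E) →L[ℝ] E :=
  vertex n j - vertex n (j - 1)

theorem vertex_apply (k : ℤ) (x : Fin (n - 1) → E) :
    vertex n k x = if h : 0 ≤ k ∧ k < (n : ℤ) - 1 then x ⟨k.toNat, by omega⟩ else 0 := by
  unfold vertex; split_ifs <;> rfl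

theorem vertex_natCast (k : Fin (n - 1)) (x : Fin (n - 1) → E) : vertex n (k : ℕ) x = x k := by
  rw [vertex_apply, dif_pos (by omega)]
  rfl

theorem vertex_of_not_mem {k : ℤ} (hk : ¬ (0 ≤ k ∧ k < (n : ℤ) - 1)) (x : Fin (n - 1) → E) :
    vertex n k x = 0 := by
  rw [vertex_apply, dif_neg hk]

theorem vertex_single (k : Fin (n - 1)) (e : E) (m : ℤ) :
    vertex n m (Pi.single k e) = if m = (k : ℕ) then e else 0 := by
  simp only [vertex_apply, Pi.single_apply, Fin.ext_iff]
  split_ifs <;> first | rfl | omega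

theorem sum_edge (x : Fin (n - 1) → E) : ∑ j : Fin n, edge n j x = 0 := by
  rw [Fin.sum_univ_eq_sum_range (fun i => edge n (i : ℤ) x)]
  have := Finset.sum_range_sub (fun i : ℕ => vertex n ((i : ℤ) - 1) x) n
  simp only [Nat.cast_succ, add_sub_cancel_right] at this
  simp only [edge, sub_apply, this]
  rw [vertex_of_not_mem (k := (n : ℤ) - 1) (by omega),
    vertex_of_not_mem (k := ((0 : ℕ) : ℤ) - 1) (by omega), sub_zero]

theorem sum_inner_edge_single (y : Fin n → E) (k : Fin (n - 1)) (e : E) :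
    ∑ j : Fin n, ⟪y j, edge n j (Pi.single k e)⟫ = ⟪y ⟨k, by omega⟩ - y ⟨k + 1, by omega⟩, e⟫ := by
  simp only [edge, sub_apply, vertex_single, inner_sub_right, inner_sub_left,
    Finset.sum_sub_distrib]
  rw [Fintype.sum_eq_single ⟨k, by omega⟩ fun j hj => ?_,
    Fintype.sum_eq_single ⟨k + 1, by omega⟩ fun j hj => ?_]
  · simp
  all_goals
    rw [if_neg, inner_zero_right]
    intro h
    apply hj
    ext
    dsimp only
    omega

theorem forall_sum_inner_edge_eq_zero_iff (y : Fin n → E) :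
    (∀ x : Fin (n - 1) → E, ∑ j : Fin n, ⟪y j, edge n j x⟫ = 0) ↔ ∀ i j, y i = y j := by
  constructor
  · intro h
    refine Fin.apply_eq_apply_of_forall_apply_eq_apply_succ fun k => ?_
    rw [← sub_eq_zero, ← inner_self_eq_zero (𝕜 := ℝ), ← sum_inner_edge_single, h]
  · intro h x
    rcases isEmpty_or_nonempty (Fin n) with _ | ⟨⟨i⟩⟩
    · simp
    · simp_rw [h _ i, ← inner_sum, sum_edge, inner_zero_right]

theorem forall_mem_iff_forall_edge_mem (S : Submodule ℝ E) (x : Fin (n - 1) → E) :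
    (∀ k, x k ∈ S) ↔ ∀ j : Fin n, edge n j x ∈ S := by
  constructor
  · intro h j
    have hvertex (m : ℤ) : vertex n m x ∈ S := by
      rw [vertex_apply]
      split_ifs
      exacts [h _, S.zero_mem]
    exact S.sub_mem (hvertex _) (hvertex _)
  · intro h k
    have hvertex (i : ℕ) : vertex n ((i : ℤ) - 1) x ∈ S := by
      induction i with
      | zero => rw [vertex_of_not_mem (by omega)]; exact S.zero_mem
      | succ i ih =>
        by_cases hi : i < n
        · simpa [edge] using S.add_mem ih (h ⟨i, hi⟩)
        · rw [vertex_of_not_mem (by omega)]; exact S.zero_mem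
    simpa [vertex_natCast] using hvertex (k + 1)

end Polygon

open Polygon

theorem Fmap_apply {d n : ℕ} (v : Fin (n - 1) → EuclideanSpace ℝ (Fin d)) (j : Fin n) :
    Fmap d n v j = ‖edge n j v‖ := by
  simp only [Fmap, edge, sub_apply, vertex_apply]

theorem hasFDerivAt_Fmap {d n : ℕ} {v : Fin (n - 1) → EuclideanSpace ℝ (Fin d)}
    (hv : ∀ j : Fin n, edge n j v ≠ 0) :
    HasFDerivAt (Fmap d n)
      (ContinuousLinearMap.pi fun j : Fin n =>
        (innerSL ℝ (‖edge n j v‖⁻¹ • edge n j v)).comp (edge n j)) v := by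
  rw [hasFDerivAt_pi']
  intro j
  simp only [Fmap_apply, ContinuousLinearMap.proj_pi]
  exact (hasFDerivAt_norm (hv j)).comp v (edge (E := EuclideanSpace ℝ (Fin d)) n j).hasFDerivAt

theorem edge_ne_zero_of_mem_OmegaSet {d n : ℕ} (hn : 2 ≤ n)
    {v : Fin (n - 1) → EuclideanSpace ℝ (Fin d)} (hv : v ∈ OmegaSet d n hn) (j : Fin n) :
    edge n j v ≠ 0 := by
  obtain ⟨h0, hmid, hlast⟩ := hv
  rw [edge, sub_apply, vertex_apply, vertex_apply]
  split_ifs with h1 h2 h2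
  · rw [sub_ne_zero]
    convert (hmid ((j : ℤ) - 1).toNat (by omega)).symm using 3
    omega
  · rw [sub_zero]
    convert h0 using 3
    omega
  · rw [zero_sub, neg_ne_zero]
    convert hlast using 3
    omega
  · omega

theorem stmt_5_general {d n : ℕ} (hn : 2 ≤ n)
    (v : Fin (n - 1) → EuclideanSpace ℝ (Fin d)) (hv : v ∈ OmegaSet d n hn) :
    ¬ Function.Surjective (fderiv ℝ (Fmap d n) v) ↔
      ∃ w : EuclideanSpace ℝ (Fin d), ∀ i, ∃ c : ℝ, v i = c • w := by
  have hA := edge_ne_zero_of_mem_OmegaSet hn hv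
  have : Nonempty (Fin n) := ⟨⟨0, by omega⟩⟩
  rw [(hasFDerivAt_Fmap hA).fderiv]
  calc _ ↔ ∃ μ : Fin n → ℝ, μ ≠ 0 ∧ ∀ x, μ ⬝ᵥ _ = 0 :=
        not_surjective_iff_exists_dotProduct_eq_zero (ContinuousLinearMap.toLinearMap _)
    _ ↔ ∃ μ : Fin n → ℝ, μ ≠ 0 ∧ ∀ i j,
          μ i • ‖edge n i v‖⁻¹ • edge n i v = μ j • ‖edge n j v‖⁻¹ • edge n j v := by
        simp_rw [dotProduct, ContinuousLinearMap.coe_coe, ContinuousLinearMap.pi_apply,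
          ContinuousLinearMap.comp_apply, innerSL_apply_apply, ← real_inner_smul_left,
          forall_sum_inner_edge_eq_zero_iff]
    _ ↔ ∃ w, ∀ j : Fin n, ‖edge n j v‖⁻¹ • edge n j v ∈ ℝ ∙ w :=
        exists_smul_eq_iff_exists_mem_span_singleton fun j => norm_smul_inv_norm (hA j)
    _ ↔ ∃ w, ∀ i, v i ∈ ℝ ∙ w := by
        simp_rw [Submodule.smul_mem_iff _ (inv_ne_zero (norm_ne_zero_iff.2 (hA _))),
          forall_mem_iff_forall_edge_mem]
    _ ↔ _ := by simp_rw [Submodule.mem_span_singleton, eq_comm]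

/-- A point `v ∈ Ω` is a critical point of `F|Ω` (i.e. the derivative of
`F` at `v` has rank `< n`, equivalently is not surjective onto `ℝⁿ`) if and only if
the vectors `v₁,…,v_{n−1}` all lie on a common line through the origin. -/
theorem stmt_5 {d n : ℕ} (hd : 2 ≤ d) (hn : 2 ≤ n)
    (v : Fin (n - 1) → EuclideanSpace ℝ (Fin d)) (hv : v ∈ OmegaSet d n hn) :
    ¬ Function.Surjective (fderiv ℝ (Fmap d n) v) ↔
      ∃ w : EuclideanSpace ℝ (Fin d), ∀ i, ∃ c : ℝ, v i = c • w :=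
  stmt_5_general hn v hv
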